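/- arXiv:0808.0177 — 4 statements merged into one kernel-verified Lean document; each statement's English description precedes it below -/
import Mathlib

section
/- Let k be a field and consider the ring homomorphism φ: k[[x,y]] → k[[t₁]] × k[[t₂]] defined by x ↦ (t₁, t₂), y ↦ (t₁², 0). Then the kernel of φ is the principal ideal generated by y² − yx². -/
/-- Product topology on multivariate power series, coefficients discrete. -/
noncomputable def mvPSTop (σ k : Type) [TopologicalSpace k] :
    TopologicalSpace (MvPowerSeries σ k) :=
  inferInstanceAs (TopologicalSpace ((σ →₀ ℕ) → k))

/-- Product topology on power series in one variable. -/
noncomputable def psTop (k : Type) [TopologicalSpace k] :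
    TopologicalSpace (PowerSeries k) :=
  inferInstanceAs (TopologicalSpace ((Unit →₀ ℕ) → k))

/-- Topology on the product of two power series rings. -/
noncomputable def psProdTop (k : Type) [TopologicalSpace k] :
    TopologicalSpace (PowerSeries k × PowerSeries k) :=
  @instTopologicalSpaceProd _ _ (psTop k) (psTop k)

/-!
Since `k` is discrete and `φ` is continuous, each coefficient of `φ f` only depends on finitely
many coefficients of `f`, so `φ` can be computed on monomials:
`φ f = (f (t₁, t₁²), f (t₂, 0))`.
If `φ f = 0`, the second component says that every coefficient `f_{a,0}` vanishes, so `f = y g`.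
Cancelling `t₁²` in the first component gives `g (t, t²) = 0`, and such a `g` is divisible by
`y - x²`, the quotient being given by an explicit telescoping sum of coefficients.
-/

open MvPowerSeries MvPowerSeries.WithPiTopology PowerSeries.WithPiTopology Finset

theorem MvPowerSeries.WithPiTopology.map_eq_sum_of_continuous {σ R M : Type*} [Semiring R]
    [TopologicalSpace R] [AddCommMonoid M] [TopologicalSpace M] [T2Space M]
    (F : MvPowerSeries σ R →+ M) (hF : Continuous F) (f : MvPowerSeries σ R)
    (S : Finset (σ →₀ ℕ)) (hS : ∀ d ∉ S, F (monomial d (coeff d f)) = 0) :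
    F f = ∑ d ∈ S, F (monomial d (coeff d f)) :=
  ((hasSum_of_monomials_self f).map F hF).unique (hasSum_sum_of_ne_finset_zero hS)

/-- The exponent of `x ^ a * y ^ b`, with `x = X 0` and `y = X 1`. -/
noncomputable def xyExp (a b : ℕ) : Fin 2 →₀ ℕ := Finsupp.single 0 a + Finsupp.single 1 b

@[simp] lemma xyExp_apply_zero (a b : ℕ) : xyExp a b 0 = a := by simp [xyExp]

@[simp] lemma xyExp_apply_one (a b : ℕ) : xyExp a b 1 = b := by simp [xyExp]

lemma eq_xyExp (d : Fin 2 →₀ ℕ) : d = xyExp (d 0) (d 1) := by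
  ext i; fin_cases i <;> simp

lemma xyExp_inj {a b a' b' : ℕ} : xyExp a b = xyExp a' b' ↔ a = a' ∧ b = b' := by
  refine ⟨fun h => ⟨by simpa using congrArg (· 0) h, by simpa using congrArg (· 1) h⟩, ?_⟩
  rintro ⟨rfl, rfl⟩; rfl

lemma xyExp_le_xyExp {a b a' b' : ℕ} : xyExp a b ≤ xyExp a' b' ↔ a ≤ a' ∧ b ≤ b' := by
  simp [Finsupp.le_def, Fin.forall_fin_two]

lemma xyExp_sub_xyExp (a b a' b' : ℕ) : xyExp a b - xyExp a' b' = xyExp (a - a') (b - b') := by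
  ext i; fin_cases i <;> simp

lemma X_zero_pow_eq {R : Type*} [CommSemiring R] (n : ℕ) :
    (X 0 : MvPowerSeries (Fin 2) R) ^ n = monomial (xyExp n 0) 1 := by
  simp [X_pow_eq, xyExp]

lemma X_one_pow_eq {R : Type*} [CommSemiring R] (n : ℕ) :
    (X 1 : MvPowerSeries (Fin 2) R) ^ n = monomial (xyExp 0 n) 1 := by
  simp [X_pow_eq, xyExp]

lemma coeff_xyExp_monomial_mul {R : Type*} [CommSemiring R] (q : MvPowerSeries (Fin 2) R)
    (a b i j : ℕ) (c : R) :
    coeff (xyExp a b) (monomial (xyExp i j) c * q) =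
      if i ≤ a ∧ j ≤ b then c * coeff (xyExp (a - i) (b - j)) q else 0 := by
  simp only [coeff_monomial_mul, xyExp_le_xyExp, xyExp_sub_xyExp]

lemma coeff_xyExp_X_one_sub_X_zero_sq_mul {R : Type*} [CommRing R] (q : MvPowerSeries (Fin 2) R)
    (a b : ℕ) :
    coeff (xyExp a b) ((X 1 - X 0 ^ 2) * q) =
      (if 1 ≤ b then coeff (xyExp a (b - 1)) q else 0) -
        if 2 ≤ a then coeff (xyExp (a - 2) b) q else 0 := by
  rw [sub_mul, map_sub, ← pow_one (X 1), X_one_pow_eq, X_zero_pow_eq, coeff_xyExp_monomial_mul,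
    coeff_xyExp_monomial_mul]
  simp

/-- The coefficient hypothesis says `g (t, t²) = 0`. -/
theorem X_one_sub_X_zero_sq_dvd {R : Type*} [CommRing R] (g : MvPowerSeries (Fin 2) R)
    (hg : ∀ n, ∑ j ∈ range (n / 2 + 1), coeff (xyExp (n - 2 * j) j) g = 0) :
    X 1 - X 0 ^ 2 ∣ g := by
  -- `(y - x²) q = g` asks for `q_{a,b} = g_{a,b+1} + q_{a-2,b+1}`; unrolling gives `q`.
  set q : MvPowerSeries (Fin 2) R :=
    fun e => ∑ m ∈ range (e 0 / 2 + 1), coeff (xyExp (e 0 - 2 * m) (e 1 + 1 + m)) g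
  have hq (a b : ℕ) : coeff (xyExp a b) q =
      ∑ m ∈ range (a / 2 + 1), coeff (xyExp (a - 2 * m) (b + 1 + m)) g := by
    rw [coeff_apply]; simp only [q, xyExp_apply_zero, xyExp_apply_one]
  refine ⟨q, ext fun e => ?_⟩
  rw [eq_xyExp e, coeff_xyExp_X_one_sub_X_zero_sq_mul]
  generalize e 0 = a, e 1 = b
  rcases lt_or_ge a 2 with ha | ha
  · have ha' : a / 2 = 0 := by omega
    rcases b with _ | b
    · simpa [ha', show ¬ 2 ≤ a by omega] using hg a
    · simp [hq, ha', show ¬ 2 ≤ a by omega]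
  obtain ⟨a, rfl⟩ := Nat.exists_eq_add_of_le' ha
  have hdiv : (a + 2) / 2 = a / 2 + 1 := by omega
  have hshift (m c d : ℕ) (hc : c = d + 1 + m) :
      coeff (xyExp (a + 2 - 2 * (m + 1)) c) g = coeff (xyExp (a - 2 * m) (d + 1 + m)) g := by
    rw [hc, show a + 2 - 2 * (m + 1) = a - 2 * m by omega]
  rcases b with _ | b
  · have h := hg (a + 2)
    rw [hdiv, sum_range_succ', sum_congr rfl fun m _ => hshift m _ 0 (by omega), ← hq] at h
    simp only [nonpos_iff_eq_zero, one_ne_zero, if_false, le_add_iff_nonneg_left, zero_le,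
      if_true, add_tsub_cancel_right]
    linear_combination h
  · simp only [le_add_iff_nonneg_left, zero_le, if_true, add_tsub_cancel_right]
    rw [hq, hq, hdiv, sum_range_succ', sum_congr rfl fun m _ => hshift m _ (b + 1) (by omega)]
    simp

section AlgHom

variable {R : Type*} [CommRing R]
  (φ : MvPowerSeries (Fin 2) R →ₐ[R] PowerSeries R × PowerSeries R)

lemma map_monomial_xyExp (hx : φ (X 0) = (PowerSeries.X, PowerSeries.X))
    (hy : φ (X 1) = (PowerSeries.X ^ 2, 0)) (a b : ℕ) (c : R) :
    φ (monomial (xyExp a b) c) =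
      c • (PowerSeries.X ^ (a + 2 * b), PowerSeries.X ^ a * 0 ^ b) := by
  have : monomial (xyExp a b) c = c • (X 0 ^ a * X 1 ^ b) := by
    rw [X_zero_pow_eq, X_one_pow_eq, monomial_mul_monomial, ← map_smul]
    simp [xyExp]
  rw [this, map_smul, map_mul, map_pow, map_pow, hx, hy, pow_add, pow_mul]
  rfl

lemma coeff_fst_map_monomial_xyExp (hx : φ (X 0) = (PowerSeries.X, PowerSeries.X))
    (hy : φ (X 1) = (PowerSeries.X ^ 2, 0)) (a b n : ℕ) (c : R) :
    PowerSeries.coeff n (φ (monomial (xyExp a b) c)).1 = if a + 2 * b = n then c else 0 := by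
  simp [map_monomial_xyExp φ hx hy, PowerSeries.coeff_X_pow, eq_comm]

lemma coeff_snd_map_monomial_xyExp (hx : φ (X 0) = (PowerSeries.X, PowerSeries.X))
    (hy : φ (X 1) = (PowerSeries.X ^ 2, 0)) (a b n : ℕ) (c : R) :
    PowerSeries.coeff n (φ (monomial (xyExp a b) c)).2 = if a = n ∧ b = 0 then c else 0 := by
  rcases b with _ | b <;> simp [map_monomial_xyExp φ hx hy, PowerSeries.coeff_X_pow, eq_comm]

variable [TopologicalSpace R] [T2Space R]

lemma coeff_fst_map (hφ : Continuous φ) (hx : φ (X 0) = (PowerSeries.X, PowerSeries.X))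
    (hy : φ (X 1) = (PowerSeries.X ^ 2, 0)) (f : MvPowerSeries (Fin 2) R) (n : ℕ) :
    PowerSeries.coeff n (φ f).1 = ∑ j ∈ range (n / 2 + 1), coeff (xyExp (n - 2 * j) j) f := by
  let F : MvPowerSeries (Fin 2) R →+ R :=
    (PowerSeries.coeff n).toAddMonoidHom.comp ((AddMonoidHom.fst _ _).comp φ.toAddMonoidHom)
  have hF : Continuous F := (continuous_coeff R n).comp (continuous_fst.comp hφ)
  have hF_monomial (a b : ℕ) (c : R) :
      F (monomial (xyExp a b) c) = if a + 2 * b = n then c else 0 :=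
    coeff_fst_map_monomial_xyExp φ hx hy a b n c
  have hS : ∀ d ∉ (range (n / 2 + 1)).image (fun j => xyExp (n - 2 * j) j),
      F (monomial d (coeff d f)) = 0 := by
    intro d hd
    obtain ⟨a, b, rfl⟩ : ∃ a b, d = xyExp a b := ⟨_, _, eq_xyExp d⟩
    refine (hF_monomial a b _).trans (if_neg fun h => hd (mem_image.mpr ⟨b, ?_, ?_⟩))
    · rw [mem_range]; omega
    · rw [xyExp_inj]; omega
  refine (map_eq_sum_of_continuous F hF f _ hS).trans ?_
  rw [sum_image fun i _ j _ h => (xyExp_inj.mp h).2]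
  refine sum_congr rfl fun j hj => (hF_monomial _ _ _).trans (if_pos ?_)
  rw [mem_range] at hj
  omega

lemma coeff_snd_map (hφ : Continuous φ) (hx : φ (X 0) = (PowerSeries.X, PowerSeries.X))
    (hy : φ (X 1) = (PowerSeries.X ^ 2, 0)) (f : MvPowerSeries (Fin 2) R) (n : ℕ) :
    PowerSeries.coeff n (φ f).2 = coeff (xyExp n 0) f := by
  let F : MvPowerSeries (Fin 2) R →+ R :=
    (PowerSeries.coeff n).toAddMonoidHom.comp ((AddMonoidHom.snd _ _).comp φ.toAddMonoidHom)
  have hF : Continuous F := (continuous_coeff R n).comp (continuous_snd.comp hφ)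
  have hF_monomial (a b : ℕ) (c : R) :
      F (monomial (xyExp a b) c) = if a = n ∧ b = 0 then c else 0 :=
    coeff_snd_map_monomial_xyExp φ hx hy a b n c
  have hS : ∀ d ∉ ({xyExp n 0} : Finset _), F (monomial d (coeff d f)) = 0 := by
    intro d hd
    obtain ⟨a, b, rfl⟩ : ∃ a b, d = xyExp a b := ⟨_, _, eq_xyExp d⟩
    refine (hF_monomial a b _).trans (if_neg fun h => hd (mem_singleton.mpr ?_))
    rw [xyExp_inj]; exact h
  refine (map_eq_sum_of_continuous F hF f _ hS).trans ?_
  rw [sum_singleton, hF_monomial, if_pos ⟨rfl, rfl⟩]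

lemma X_one_dvd_of_snd_map_eq_zero (hφ : Continuous φ)
    (hx : φ (X 0) = (PowerSeries.X, PowerSeries.X)) (hy : φ (X 1) = (PowerSeries.X ^ 2, 0))
    {f : MvPowerSeries (Fin 2) R} (hf : (φ f).2 = 0) : X 1 ∣ f :=
  X_dvd_iff.mpr fun d hd => by
    rw [eq_xyExp d, hd, ← coeff_snd_map φ hφ hx hy, hf, map_zero]

lemma X_one_sub_X_zero_sq_dvd_of_fst_map_eq_zero (hφ : Continuous φ)
    (hx : φ (X 0) = (PowerSeries.X, PowerSeries.X)) (hy : φ (X 1) = (PowerSeries.X ^ 2, 0))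
    {g : MvPowerSeries (Fin 2) R} (hg : (φ g).1 = 0) : X 1 - X 0 ^ 2 ∣ g :=
  X_one_sub_X_zero_sq_dvd g fun n => by rw [← coeff_fst_map φ hφ hx hy, hg, map_zero]

end AlgHom

/-- Let `k` be a field and `φ : k[[x,y]] → k[[t₁]] × k[[t₂]]` the (unique)
continuous `k`-algebra homomorphism with `x ↦ (t₁, t₂)`, `y ↦ (t₁², 0)`.
Then `ker φ = (y² − y·x²)`. -/
theorem stmt1 (k : Type) [Field k] [TopologicalSpace k] [DiscreteTopology k]
    (φ : MvPowerSeries (Fin 2) k →ₐ[k] PowerSeries k × PowerSeries k)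
    (hcont : @Continuous _ _ (mvPSTop (Fin 2) k) (psProdTop k) φ)
    (hx : φ (MvPowerSeries.X 0) = (PowerSeries.X, PowerSeries.X))
    (hy : φ (MvPowerSeries.X 1) = (PowerSeries.X ^ 2, 0)) :
    RingHom.ker φ =
      Ideal.span {MvPowerSeries.X 1 ^ 2 -
        MvPowerSeries.X 1 * MvPowerSeries.X 0 ^ 2} := by
  -- `mvPSTop` and `psProdTop` are, by definition, Mathlib's `WithPiTopology` topologies.
  have hφ : Continuous φ := hcont
  have hgen : φ (X 1 ^ 2 - X 1 * X 0 ^ 2) = 0 := by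
    rw [map_sub, map_mul, map_pow, map_pow, hx, hy, Prod.pow_mk, Prod.pow_mk, Prod.mk_mul_mk,
      Prod.mk_sub_mk, Prod.mk_eq_zero]
    constructor <;> ring
  ext f
  rw [RingHom.mem_ker, Ideal.mem_span_singleton]
  refine ⟨fun hf => ?_, fun ⟨q, hq⟩ => by rw [hq, map_mul, hgen, zero_mul]⟩
  obtain ⟨g, rfl⟩ := X_one_dvd_of_snd_map_eq_zero φ hφ hx hy (congrArg Prod.snd hf)
  have hg : (φ g).1 = 0 := by
    have h := congrArg Prod.fst hf
    rw [map_mul, hy, Prod.fst_mul, Prod.fst_zero] at h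
    exact (mul_eq_zero.mp h).resolve_left (pow_ne_zero 2 PowerSeries.X_ne_zero)
  obtain ⟨q, rfl⟩ := X_one_sub_X_zero_sq_dvd_of_fst_map_eq_zero φ hφ hx hy hg
  exact ⟨q, by ring⟩
end

section
/- Let p ∈ C be an elliptic m-fold point on a reduced curve C over an algebraically closed field k, with normalization π: C̃ → C at p and preimages p₁,…,p_m. Assume char k ≠ 2,3 if m = 1 and char k ≠ 2 if m = 2. Then a regular vector field ⊕_i f_i(t_i) d/dt_i on C̃ (in suitable formal coordinates t_i at p_i), with f_i = a_{i0} + a_{i1} t_i + (higher order), descends to a regular vector field on C if and only if a_{10} = ⋯ = a_{m0} = 0 and a_{11} = a_{21} = ⋯ = a_{m1}. -/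
set_option synthInstance.maxHeartbeats 1000000
set_option maxHeartbeats 1000000

/-- The complete local ring of the elliptic `m`-fold point inside its
normalization `k[[t₁]] × ⋯ × k[[t_m]]`. -/
noncomputable def ellipticSubalgebra (k : Type) [Field k] (m : ℕ) :
    Subalgebra k (Fin m → PowerSeries k) :=
  Algebra.adjoin k
    ({g : Fin m → PowerSeries k | ∃ i : Fin (m - 1),
        g = fun j : Fin m =>
          if (j : ℕ) = (i : ℕ) ∨ (j : ℕ) = m - 1 then PowerSeries.X else 0}
      ∪ {g : Fin m → PowerSeries k |
          ∀ j : Fin m, g j ∈ (Ideal.span {PowerSeries.X}) ^ 2})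

/-!
In the standard coordinates, the complete local ring `R ⊆ k[[t₁]] × ⋯ × k[[t_m]]` of the elliptic
`m`-fold point is cut out by conditions on 1-jets alone: the constant terms agree, and the linear
term of the last component is the sum of the linear terms of the others. The vector field
`⊕ fᵢ d/dtᵢ` sends `g` to a tuple with constant terms `a_{i0} g_{i1}` and linear terms
`a_{i1} g_{i1} + 2 a_{i0} g_{i2}`, so preserving `R` is a condition on the `a_{i0}` and `a_{i1}`.
Testing it on `t_j²` gives `2 a_{j0} = 0`, and on the coordinate functions `t_i ⊕ t_m` it gives
`a_{i1} = a_{m1}`, and also `a_{i0} = 0` once `m ≥ 3`; the latter replaces the first test in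
characteristic `2`.
-/

open PowerSeries

section Jets

variable {R : Type*} [CommSemiring R] {n : ℕ}

theorem constantCoeff_mul_derivative (f g : R⟦X⟧) :
    constantCoeff (f * derivative R g) = constantCoeff f * coeff 1 g := by
  rw [map_mul, ← coeff_zero_eq_constantCoeff_apply (derivative R g), coeff_derivative]
  simp

theorem coeff_one_mul_derivative (f g : R⟦X⟧) :
    coeff 1 (f * derivative R g) = coeff 1 f * coeff 1 g + 2 * constantCoeff f * coeff 2 g := by
  rw [coeff_one_mul, coeff_derivative, ← coeff_zero_eq_constantCoeff_apply (derivative R g),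
    coeff_derivative]
  push_cast
  ring

theorem mem_span_X_sq_iff {y : R⟦X⟧} :
    y ∈ Ideal.span {X} ^ 2 ↔ constantCoeff y = 0 ∧ coeff 1 y = 0 := by
  rw [Ideal.span_singleton_pow, Ideal.mem_span_singleton, X_pow_dvd_iff]
  constructor
  · intro h
    exact ⟨by simpa using h 0 two_pos, h 1 one_lt_two⟩
  · rintro ⟨h0, h1⟩ (_ | _ | _) hm
    · simpa using h0
    · exact h1
    · omega

variable (R n) in
noncomputable def ellipticJetSubalgebra : Subalgebra R (Fin (n + 1) → R⟦X⟧) where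
  carrier := {g | (∀ i, constantCoeff (g i) = constantCoeff (g (Fin.last n))) ∧
      coeff 1 (g (Fin.last n)) = ∑ i : Fin n, coeff 1 (g i.castSucc)}
  mul_mem' := by
    rintro f g ⟨hf0, hf1⟩ ⟨hg0, hg1⟩
    refine ⟨fun i => by simp only [Pi.mul_apply, map_mul, hf0 i, hg0 i], ?_⟩
    have hcoeff (i : Fin (n + 1)) : coeff 1 ((f * g) i) =
        coeff 1 (f i) * constantCoeff (g (Fin.last n))
          + coeff 1 (g i) * constantCoeff (f (Fin.last n)) := by
      rw [Pi.mul_apply, coeff_one_mul, hg0 i, hf0 i]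
    simp only [hcoeff, hf1, hg1, Finset.sum_add_distrib, Finset.sum_mul]
  add_mem' := by
    rintro f g ⟨hf0, hf1⟩ ⟨hg0, hg1⟩
    refine ⟨fun i => by simp only [Pi.add_apply, map_add, hf0 i, hg0 i], ?_⟩
    simp only [Pi.add_apply, map_add, hf1, hg1, Finset.sum_add_distrib]
  algebraMap_mem' c := by
    simp [Pi.algebraMap_apply]

theorem single_mem_ellipticJetSubalgebra_iff (j : Fin (n + 1)) {y : R⟦X⟧}
    (hy : constantCoeff y = 0) :
    Pi.single j y ∈ ellipticJetSubalgebra R n ↔ coeff 1 y = 0 := by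
  have hconst (i : Fin (n + 1)) : constantCoeff ((Pi.single j y : Fin (n + 1) → R⟦X⟧) i) = 0 := by
    rw [Pi.single_apply]; split_ifs <;> simp [hy]
  change (∀ i, _ = _) ∧ _ ↔ _
  simp only [hconst, forall_const, true_and]
  induction j using Fin.lastCases with
  | last => simp [Fin.castSucc_ne_last]
  | cast u =>
    simp [Fin.castSucc_ne_last, Pi.single_apply, Fin.castSucc_inj, apply_ite (coeff 1), eq_comm]

/-- The pullback `t_u ⊕ t_m` of the coordinate function `x_u`; the `m`-th branch is
`Fin.last n`. -/
noncomputable def ellipticGen (u : Fin n) : Fin (n + 1) → R⟦X⟧ :=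
  Pi.single u.castSucc X + Pi.single (Fin.last n) X

@[simp]
theorem ellipticGen_last (u : Fin n) : ellipticGen (R := R) u (Fin.last n) = X := by
  simp [ellipticGen, Fin.castSucc_ne_last]

@[simp]
theorem ellipticGen_castSucc (u w : Fin n) :
    ellipticGen (R := R) u w.castSucc = if w = u then X else 0 := by
  simp [ellipticGen, Pi.single_apply, Fin.castSucc_inj, Fin.castSucc_ne_last]

theorem ellipticGen_mem_ellipticJetSubalgebra (u : Fin n) :
    ellipticGen u ∈ ellipticJetSubalgebra R n := by
  refine ⟨fun i => ?_, ?_⟩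
  · induction i using Fin.lastCases with
    | last => rfl
    | cast w => simp [apply_ite constantCoeff]
  · simp [apply_ite (coeff 1)]

end Jets

section Comparison

variable {k : Type} [Field k] {n : ℕ}

theorem ellipticGen_eq_ite (u : Fin n) :
    ellipticGen (R := k) u =
      fun j : Fin (n + 1) => if (j : ℕ) = u ∨ (j : ℕ) = n + 1 - 1 then X else 0 := by
  funext j
  induction j using Fin.lastCases with
  | last => simp
  | cast w => simp [Fin.ext_iff, w.isLt.ne]

theorem ellipticGen_mem (u : Fin n) : ellipticGen u ∈ ellipticSubalgebra k (n + 1) :=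
  Algebra.subset_adjoin (Or.inl ⟨u, ellipticGen_eq_ite u⟩)

theorem ellipticSubalgebra_le_ellipticJetSubalgebra :
    ellipticSubalgebra k (n + 1) ≤ ellipticJetSubalgebra k n := by
  refine Algebra.adjoin_le ?_
  rintro g (⟨u, rfl⟩ | hg)
  · exact ellipticGen_eq_ite (k := k) (n := n) u ▸ ellipticGen_mem_ellipticJetSubalgebra u
  · simp only [mem_span_X_sq_iff] at hg
    exact ⟨fun i => by rw [(hg i).1, (hg _).1], by simp [(hg _).2]⟩

theorem ellipticJetSubalgebra_le_ellipticSubalgebra :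
    ellipticJetSubalgebra k n ≤ ellipticSubalgebra k (n + 1) := by
  rintro g ⟨hg0, hg1⟩
  set h := g - algebraMap k _ (constantCoeff (g (Fin.last n)))
    - ∑ u, coeff 1 (g u.castSucc) • ellipticGen u with h_def
  have hh : h ∈ ellipticSubalgebra k (n + 1) := by
    refine Algebra.subset_adjoin (Or.inr fun j => mem_span_X_sq_iff.2 ?_)
    induction j using Fin.lastCases with
    | last => simp [h_def, hg1]
    | cast w => simp [h_def, hg0 w.castSucc]
  have hg : g = algebraMap k _ (constantCoeff (g (Fin.last n)))
      + ∑ u, coeff 1 (g u.castSucc) • ellipticGen u + h := by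
    rw [h_def]; abel
  rw [hg]
  exact add_mem (add_mem (Subalgebra.algebraMap_mem _ _)
    (Subalgebra.sum_mem _ fun u _ => Subalgebra.smul_mem _ (ellipticGen_mem u) _)) hh

theorem ellipticSubalgebra_eq_ellipticJetSubalgebra :
    ellipticSubalgebra k (n + 1) = ellipticJetSubalgebra k n :=
  le_antisymm ellipticSubalgebra_le_ellipticJetSubalgebra
    ellipticJetSubalgebra_le_ellipticSubalgebra

end Comparison

section VectorField

variable {R : Type*} [CommSemiring R] {n : ℕ} {f : Fin (n + 1) → R⟦X⟧}

theorem mul_derivative_mem_ellipticJetSubalgebra (h0 : ∀ i, constantCoeff (f i) = 0)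
    (h1 : ∀ i, coeff 1 (f i) = coeff 1 (f (Fin.last n))) {g : Fin (n + 1) → R⟦X⟧}
    (hg : g ∈ ellipticJetSubalgebra R n) :
    (fun i => f i * derivative R (g i)) ∈ ellipticJetSubalgebra R n := by
  obtain ⟨-, hg1⟩ := hg
  refine ⟨fun i => by simp [constantCoeff_mul_derivative, h0], ?_⟩
  simp only [coeff_one_mul_derivative, h0, h1, mul_zero, zero_mul, add_zero, hg1, Finset.mul_sum]

variable (hf : ∀ g ∈ ellipticJetSubalgebra R n,
  (fun i => f i * derivative R (g i)) ∈ ellipticJetSubalgebra R n)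
include hf

theorem two_mul_constantCoeff_eq_zero_of_forall_mem (j : Fin (n + 1)) :
    2 * constantCoeff (f j) = 0 := by
  have hsq : Pi.single j (X ^ 2) ∈ ellipticJetSubalgebra R n :=
    (single_mem_ellipticJetSubalgebra_iff j (by simp)).2 (by simp [coeff_X_pow])
  have hD := hf _ hsq
  rw [funext (Pi.apply_single (fun i y => f i * derivative R y) (by simp) j (X ^ 2)),
    single_mem_ellipticJetSubalgebra_iff j (by simp), coeff_one_mul_derivative] at hD
  simpa [coeff_X_pow] using hD

theorem constantCoeff_eq_zero_of_forall_mem (hn : 2 ≤ n) (j : Fin (n + 1)) :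
    constantCoeff (f j) = 0 := by
  have hgen (u : Fin n) (i : Fin (n + 1)) :
      constantCoeff (f i) * coeff 1 (ellipticGen u i) = constantCoeff (f (Fin.last n)) := by
    simpa [constantCoeff_mul_derivative] using
      (hf _ (ellipticGen_mem_ellipticJetSubalgebra u)).1 i
  have hlast : constantCoeff (f (Fin.last n)) = 0 := by
    simpa [Fin.ext_iff] using (hgen ⟨0, by omega⟩ (Fin.castSucc ⟨1, by omega⟩)).symm
  induction j using Fin.lastCases with
  | last => exact hlast
  | cast u => simpa [hlast] using hgen u u.castSucc

theorem coeff_one_eq_of_forall_mem (h0 : ∀ i, constantCoeff (f i) = 0) (i : Fin (n + 1)) :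
    coeff 1 (f i) = coeff 1 (f (Fin.last n)) := by
  induction i using Fin.lastCases with
  | last => rfl
  | cast u =>
    simpa [coeff_one_mul_derivative, h0, apply_ite (coeff 1)] using
      (hf _ (ellipticGen_mem_ellipticJetSubalgebra u)).2.symm

end VectorField

theorem stmt11_general (k : Type) [Field k] (m : ℕ) (hm : 1 ≤ m)
    (hchar1 : m = 1 → (ringChar k ≠ 2 ∧ ringChar k ≠ 3))
    (hchar2 : m = 2 → ringChar k ≠ 2)
    (f : Fin m → PowerSeries k) :
    (∀ g ∈ ellipticSubalgebra k m,
        (fun i : Fin m => f i * PowerSeries.derivative k (g i))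
          ∈ ellipticSubalgebra k m)
      ↔ ((∀ i : Fin m, PowerSeries.coeff 0 (f i) = 0)
          ∧ (∀ i j : Fin m,
              PowerSeries.coeff 1 (f i) = PowerSeries.coeff 1 (f j))) := by
  obtain ⟨n, rfl⟩ : ∃ n, m = n + 1 := ⟨m - 1, by omega⟩
  simp only [ellipticSubalgebra_eq_ellipticJetSubalgebra, coeff_zero_eq_constantCoeff_apply]
  refine ⟨fun hf => ?_, fun ⟨h0, h1⟩ _ =>
    mul_derivative_mem_ellipticJetSubalgebra h0 fun i => h1 i (Fin.last n)⟩
  have h0 : ∀ i, constantCoeff (f i) = 0 := by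
    by_cases hchar : ringChar k = 2
    · have hn : 2 ≤ n := by
        by_contra! hn
        interval_cases n
        exacts [(hchar1 rfl).1 hchar, hchar2 rfl hchar]
      exact constantCoeff_eq_zero_of_forall_mem hf hn
    · exact fun i => (mul_eq_zero.1 (two_mul_constantCoeff_eq_zero_of_forall_mem hf i)).resolve_left
          (Ring.two_ne_zero hchar)
  have h1 := coeff_one_eq_of_forall_mem hf h0
  exact ⟨h0, fun i j => (h1 i).trans (h1 j).symm⟩

/-- Let `p ∈ C` be an elliptic `m`-fold point, whose complete local ring `R`
sits inside the normalization `R̃ = k[[t₁]] × ⋯ × k[[t_m]]` in the standard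
coordinates (†).  Assume `char k ≠ 2, 3` if `m = 1` and `char k ≠ 2` if
`m = 2`.  A regular vector field `⊕ᵢ fᵢ(tᵢ) d/dtᵢ` on the normalization
(`fᵢ = a_{i0} + a_{i1} tᵢ + …`) descends to a regular vector field on `C`
— i.e. the corresponding derivation maps `R` into `R` — if and only if
`a_{10} = ⋯ = a_{m0} = 0` and `a_{11} = a_{21} = ⋯ = a_{m1}`. -/
theorem stmt11 (k : Type) [Field k] [IsAlgClosed k] (m : ℕ) (hm : 1 ≤ m)
    (hchar1 : m = 1 → (ringChar k ≠ 2 ∧ ringChar k ≠ 3))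
    (hchar2 : m = 2 → ringChar k ≠ 2)
    (f : Fin m → PowerSeries k) :
    (∀ g ∈ ellipticSubalgebra k m,
        (fun i : Fin m => f i * PowerSeries.derivative k (g i))
          ∈ ellipticSubalgebra k m)
      ↔ ((∀ i : Fin m, PowerSeries.coeff 0 (f i) = 0)
          ∧ (∀ i j : Fin m,
              PowerSeries.coeff 1 (f i) = PowerSeries.coeff 1 (f j))) :=
  stmt11_general k m hm hchar1 hchar2 f
end

section
/- Let p ∈ C be an elliptic m-fold point on a reduced curve over an algebraically closed field, with normalization π: C̃ → C at p and preimages p₁,…,p_m. Then the dualizing sheaf ω_C is invertible in a neighborhood of p (the elliptic m-fold point is Gorenstein), and π*ω_C ≅ ω_{C̃}(2p₁ + ⋯ + 2p_m). -/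
set_option synthInstance.maxHeartbeats 1000000
set_option maxHeartbeats 1000000

/-- The local dualizing module at an elliptic `m`-fold point: tuples of
rational (Laurent) differentials `gᵢ dtᵢ` on the branches of the
normalization satisfying the residue condition
`∑ᵢ Res_{p_i} ((π^*r)·g) = 0` for all `r` in the local ring. -/
def dualizingSet (k : Type) [Field k] (m : ℕ) : Set (Fin m → LaurentSeries k) :=
  {g | ∀ r ∈ ellipticSubalgebra k m,
    ∑ i : Fin m, ((HahnSeries.ofPowerSeries ℤ k (r i)) * g i).coeff (-1) = 0}

/-!
The local ring `R` consists of the tuples `f` whose constant terms agree and whose first-order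
coefficients satisfy `f₁'(0) + ⋯ + f_{m-1}'(0) = f_m'(0)`: the generators `tᵢ + t_m` and `𝔪²`
satisfy these two conditions, and they cut out a subalgebra which `1`, the `tᵢ + t_m` and `𝔪²`
span. With `g₀ = (dt₁/t₁², …, dt_{m-1}/t_{m-1}², -dt_m/t_m²)` the residue pairing `∑ᵢ Res (fᵢ g₀ᵢ)` is
exactly the second condition, so `g₀ ∈ ω`. Conversely, pairing `g ∈ ω` with `tᵢᵈ` (`d ≥ 2`), with
`1` and with `tᵢ + t_m` shows that `g` has poles of order at most two, residues summing to zero and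
polar parts of order two of the shape of `g₀`: exactly the conditions for `g / g₀ ∈ R`.
-/

open PowerSeries
open HahnSeries (ofPowerSeries single)

namespace EllipticMFoldPoint

variable {k : Type} [Field k] {n : ℕ}

lemma mem_span_X_sq_iff {p : k⟦X⟧} :
    p ∈ Ideal.span {X} ^ 2 ↔ constantCoeff p = 0 ∧ coeff 1 p = 0 := by
  rw [Ideal.span_singleton_pow, Ideal.mem_span_singleton, X_pow_dvd_iff]
  constructor
  · intro h
    exact ⟨by simpa using h 0 two_pos, h 1 one_lt_two⟩
  · rintro ⟨h0, h1⟩ m hm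
    interval_cases m
    · simpa using h0
    · exact h1

def branchSign (j : Fin (n + 1)) : k := if j = Fin.last n then -1 else 1

@[simp]
lemma branchSign_last : branchSign (Fin.last n) = (-1 : k) := if_pos rfl

@[simp]
lemma branchSign_castSucc (i : Fin n) : branchSign i.castSucc = (1 : k) :=
  if_neg (Fin.castSucc_ne_last i)

lemma branchSign_mul_self (j : Fin (n + 1)) : branchSign j * branchSign j = (1 : k) := by
  unfold branchSign; split <;> norm_num

lemma branchSign_ne_zero (j : Fin (n + 1)) : branchSign j ≠ (0 : k) :=
  left_ne_zero_of_mul_eq_one (branchSign_mul_self j)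

variable (k n) in
noncomputable def jetSubalgebra : Subalgebra k (Fin (n + 1) → k⟦X⟧) where
  carrier := {f | (∀ j, constantCoeff (f j) = constantCoeff (f (Fin.last n))) ∧
    ∑ j, branchSign j * coeff 1 (f j) = 0}
  mul_mem' := by
    rintro f g ⟨hf0, hf1⟩ ⟨hg0, hg1⟩
    refine ⟨fun j => by simp only [Pi.mul_apply, map_mul, hf0 j, hg0 j], ?_⟩
    calc ∑ j, branchSign j * coeff 1 (f j * g j)
        = constantCoeff (g (Fin.last n)) * ∑ j, branchSign j * coeff 1 (f j)
          + constantCoeff (f (Fin.last n)) * ∑ j, branchSign j * coeff 1 (g j) := by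
          simp only [coeff_one_mul, hf0, hg0, Finset.mul_sum, ← Finset.sum_add_distrib]
          exact Finset.sum_congr rfl fun j _ => by ring
      _ = 0 := by rw [hf1, hg1]; ring
  add_mem' := by
    rintro f g ⟨hf0, hf1⟩ ⟨hg0, hg1⟩
    refine ⟨fun j => by simp only [Pi.add_apply, map_add, hf0 j, hg0 j], ?_⟩
    simp only [Pi.add_apply, map_add, mul_add, Finset.sum_add_distrib, hf1, hg1, add_zero]
  algebraMap_mem' c := by
    refine ⟨fun j => rfl, ?_⟩
    simp [Pi.algebraMap_apply]

variable (k) in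
noncomputable def branchX (i : Fin n) : Fin (n + 1) → k⟦X⟧ :=
  Pi.single i.castSucc X + Pi.single (Fin.last n) X

lemma ellipticSubalgebra_succ :
    ellipticSubalgebra k (n + 1) = Algebra.adjoin k
      (Set.range (branchX k) ∪ {f | ∀ j, f j ∈ Ideal.span {X} ^ 2}) := by
  rw [ellipticSubalgebra]
  congr 2
  ext f
  refine exists_congr fun i => eq_comm.trans (Eq.congr_left (funext fun j => ?_))
  rcases Fin.eq_castSucc_or_eq_last j with ⟨j, rfl⟩ | rfl
  · simp [branchX, Pi.single_apply, Fin.ext_iff, j.isLt.ne]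
  · simp [branchX, (Fin.castSucc_ne_last _).symm]

lemma branchX_mem_jetSubalgebra (i : Fin n) : branchX k i ∈ jetSubalgebra k n := by
  refine ⟨fun j => ?_, ?_⟩
  · simp [branchX, Pi.single_apply, apply_ite (constantCoeff (R := k))]
  · simp [branchX, Pi.single_apply, apply_ite (coeff (R := k) 1), Fin.sum_univ_castSucc,
      (Fin.castSucc_ne_last i).symm]

lemma ellipticSubalgebra_le_jetSubalgebra : ellipticSubalgebra k (n + 1) ≤ jetSubalgebra k n := by
  rw [ellipticSubalgebra_succ, Algebra.adjoin_le_iff]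
  rintro f (⟨i, rfl⟩ | hf)
  · exact branchX_mem_jetSubalgebra i
  · have hf : ∀ j, constantCoeff (f j) = 0 ∧ coeff 1 (f j) = 0 :=
      fun j => mem_span_X_sq_iff.mp (hf j)
    exact ⟨fun j => by rw [(hf j).1, (hf _).1], by simp [hf]⟩

lemma jetSubalgebra_le_ellipticSubalgebra : jetSubalgebra k n ≤ ellipticSubalgebra k (n + 1) := by
  rintro f ⟨h0, h1⟩
  set a : Fin n → k := fun i => coeff 1 (f i.castSucc)
  set q := f - algebraMap k _ (constantCoeff (f (Fin.last n))) - ∑ i, a i • branchX k i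
  have hq : ∀ j, q j ∈ Ideal.span {X} ^ 2 := by
    intro j
    rw [mem_span_X_sq_iff]
    rcases Fin.eq_castSucc_or_eq_last j with ⟨j, rfl⟩ | rfl
    · simp [q, a, branchX, Pi.single_apply, h0 j.castSucc]
    · have hlast : coeff 1 (f (Fin.last n)) = ∑ i, a i := by
        rw [Fin.sum_univ_castSucc] at h1
        simp only [branchSign_castSucc, one_mul, branchSign_last, neg_mul] at h1
        linear_combination -h1
      simp [q, branchX, hlast]
  have hf : f = algebraMap k _ (constantCoeff (f (Fin.last n))) + ∑ i, a i • branchX k i + q := by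
    simp only [q]; abel
  rw [ellipticSubalgebra_succ, hf]
  exact add_mem (add_mem (Subalgebra.algebraMap_mem _ _) (Subalgebra.sum_mem _ fun i _ =>
    Subalgebra.smul_mem _ (Algebra.subset_adjoin (Set.mem_union_left _ (Set.mem_range_self i))) _))
    (Algebra.subset_adjoin (Set.mem_union_right _ hq))

theorem ellipticSubalgebra_succ_eq_jetSubalgebra :
    ellipticSubalgebra k (n + 1) = jetSubalgebra k n :=
  le_antisymm ellipticSubalgebra_le_jetSubalgebra jetSubalgebra_le_ellipticSubalgebra

lemma pi_single_mem_ellipticSubalgebra (j : Fin (n + 1)) {p : k⟦X⟧} (hp : p ∈ Ideal.span {X} ^ 2) :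
    Pi.single j p ∈ ellipticSubalgebra k (n + 1) := by
  rw [ellipticSubalgebra_succ]
  refine Algebra.subset_adjoin (Set.mem_union_right _ fun i => ?_)
  rcases eq_or_ne i j with rfl | hij
  · simpa using hp
  · simp [hij]

lemma coeff_ofPowerSeries_mul_single {R : Type*} [Semiring R] (p : R⟦X⟧) (c : R) (b : ℤ) (d : ℕ) :
    (ofPowerSeries ℤ R p * single b c).coeff (d + b) = coeff d p * c := by
  rw [HahnSeries.coeff_mul_single_add, HahnSeries.ofPowerSeries_apply_coeff]

lemma sum_coeff_ofPowerSeries_pi_single_mul (g : Fin (n + 1) → LaurentSeries k) (j : Fin (n + 1))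
    (p : k⟦X⟧) (m : ℤ) :
    ∑ i, (ofPowerSeries ℤ k ((Pi.single j p : Fin (n + 1) → k⟦X⟧) i) * g i).coeff m =
      (ofPowerSeries ℤ k p * g j).coeff m := by
  rw [Fintype.sum_eq_single j fun i hi => by simp [hi], Pi.single_eq_same]

lemma coeff_eq_zero_of_mem_dualizingSet {g : Fin (n + 1) → LaurentSeries k}
    (hg : g ∈ dualizingSet k (n + 1)) (j : Fin (n + 1)) {m : ℤ} (hm : m ≤ -3) :
    (g j).coeff m = 0 := by
  obtain ⟨d, hd, rfl⟩ : ∃ d : ℕ, 2 ≤ d ∧ m = -1 - d := ⟨(-1 - m).toNat, by omega, by omega⟩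
  have hX : (X : k⟦X⟧) ^ d ∈ Ideal.span {X} ^ 2 := by
    rw [Ideal.span_singleton_pow, Ideal.mem_span_singleton]
    exact pow_dvd_pow X hd
  have := hg _ (pi_single_mem_ellipticSubalgebra j hX)
  rwa [sum_coeff_ofPowerSeries_pi_single_mul, HahnSeries.ofPowerSeries_X_pow,
    HahnSeries.coeff_single_mul, one_mul] at this

lemma sum_coeff_neg_one_eq_zero_of_mem_dualizingSet {g : Fin (n + 1) → LaurentSeries k}
    (hg : g ∈ dualizingSet k (n + 1)) : ∑ j, (g j).coeff (-1) = 0 := by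
  simpa using hg 1 (one_mem _)

lemma coeff_neg_two_castSucc_add_last_of_mem_dualizingSet {g : Fin (n + 1) → LaurentSeries k}
    (hg : g ∈ dualizingSet k (n + 1)) (i : Fin n) :
    (g i.castSucc).coeff (-2) + (g (Fin.last n)).coeff (-2) = 0 := by
  have := hg _ (jetSubalgebra_le_ellipticSubalgebra (branchX_mem_jetSubalgebra i))
  simp only [branchX, Pi.add_apply, map_add, add_mul, HahnSeries.coeff_add, Finset.sum_add_distrib,
    sum_coeff_ofPowerSeries_pi_single_mul, HahnSeries.ofPowerSeries_X, HahnSeries.coeff_single_mul,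
    one_mul] at this
  simpa using this

variable (k n) in
noncomputable def dualGenerator : Fin (n + 1) → LaurentSeries k :=
  fun j => single (-2) (branchSign j)

lemma order_dualGenerator (j : Fin (n + 1)) : (dualGenerator k n j).order = -2 :=
  HahnSeries.order_single (branchSign_ne_zero j)

lemma coeff_ofPowerSeries_mul_dualGenerator (p : k⟦X⟧) (j : Fin (n + 1)) (d : ℕ) :
    (ofPowerSeries ℤ k p * dualGenerator k n j).coeff (d + -2) = coeff d p * branchSign j :=
  coeff_ofPowerSeries_mul_single p _ _ d

lemma dualGenerator_mem_dualizingSet : dualGenerator k n ∈ dualizingSet k (n + 1) := by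
  intro r hr
  rw [ellipticSubalgebra_succ_eq_jetSubalgebra] at hr
  have hres (j : Fin (n + 1)) :
      (ofPowerSeries ℤ k (r j) * dualGenerator k n j).coeff (-1) = branchSign j * coeff 1 (r j) :=
    (coeff_ofPowerSeries_mul_dualGenerator (r j) j 1).trans (mul_comm _ _)
  simpa only [hres] using hr.2

noncomputable def dualQuotient (g : Fin (n + 1) → LaurentSeries k) : Fin (n + 1) → k⟦X⟧ :=
  fun j => mk fun d => branchSign j * (g j).coeff (d + -2)

lemma dualQuotient_mem_ellipticSubalgebra {g : Fin (n + 1) → LaurentSeries k}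
    (hg : g ∈ dualizingSet k (n + 1)) : dualQuotient g ∈ ellipticSubalgebra k (n + 1) := by
  rw [ellipticSubalgebra_succ_eq_jetSubalgebra]
  refine ⟨fun j => ?_, ?_⟩
  · rcases Fin.eq_castSucc_or_eq_last j with ⟨i, rfl⟩ | rfl
    · simp only [dualQuotient, branchSign_castSucc, branchSign_last, constantCoeff_mk,
        Nat.cast_zero, zero_add]
      linear_combination coeff_neg_two_castSucc_add_last_of_mem_dualizingSet hg i
    · rfl
  · simp only [dualQuotient, coeff_mk, ← mul_assoc, branchSign_mul_self, one_mul]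
    exact sum_coeff_neg_one_eq_zero_of_mem_dualizingSet hg

lemma ofPowerSeries_dualQuotient_mul_dualGenerator {g : Fin (n + 1) → LaurentSeries k}
    (hg : g ∈ dualizingSet k (n + 1)) :
    (fun j => ofPowerSeries ℤ k (dualQuotient g j) * dualGenerator k n j) = g := by
  ext j m
  obtain hm | ⟨d, rfl⟩ : m ≤ -3 ∨ ∃ d : ℕ, m = d + -2 :=
    (lt_or_ge m (-2)).imp (by omega) fun hm => ⟨(m + 2).toNat, by omega⟩
  · rw [coeff_eq_zero_of_mem_dualizingSet hg j hm, dualGenerator, HahnSeries.coeff_mul_single,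
      PowerSeries.coeff_coe, if_pos (by omega), zero_mul]
  · rw [coeff_ofPowerSeries_mul_dualGenerator, dualQuotient, coeff_mk, mul_comm, ← mul_assoc,
      branchSign_mul_self, one_mul]

lemma ofPowerSeries_mul_dualGenerator_injective :
    Function.Injective fun (r : Fin (n + 1) → k⟦X⟧) j =>
      ofPowerSeries ℤ k (r j) * dualGenerator k n j := by
  intro r s h
  funext j
  have hne : dualGenerator k n j ≠ 0 := HahnSeries.single_ne_zero (branchSign_ne_zero j)
  exact HahnSeries.ofPowerSeries_injective (mul_right_cancel₀ hne (congrFun h j))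

end EllipticMFoldPoint

open EllipticMFoldPoint

theorem stmt12_general (k : Type) [Field k] (m : ℕ) (hm : 1 ≤ m) :
    ∃ g₀ ∈ dualizingSet k m,
      (∀ i : Fin m, (g₀ i).order = -2) ∧
      (∀ g ∈ dualizingSet k m,
        ∃! r : ellipticSubalgebra k m,
          g = fun i : Fin m =>
            (HahnSeries.ofPowerSeries ℤ k
              ((r : Fin m → PowerSeries k) i)) * g₀ i) := by
  obtain ⟨n, rfl⟩ : ∃ n, m = n + 1 := ⟨m - 1, by omega⟩
  refine ⟨dualGenerator k n, dualGenerator_mem_dualizingSet, order_dualGenerator, fun g hg => ?_⟩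
  refine ⟨⟨dualQuotient g, dualQuotient_mem_ellipticSubalgebra hg⟩,
    (ofPowerSeries_dualQuotient_mul_dualGenerator hg).symm, fun r hr => Subtype.ext ?_⟩
  exact ofPowerSeries_mul_dualGenerator_injective
    (hr.symm.trans (ofPowerSeries_dualQuotient_mul_dualGenerator hg).symm)

/-- If `p ∈ C` is an elliptic `m`-fold point, then the dualizing sheaf `ω_C`
is invertible near `p` (the elliptic `m`-fold point is Gorenstein) — here: the
local dualizing module is free of rank one over the local ring `R`, generated
by a differential `g₀` — and `π^*ω_C = ω_{C̃}(2p₁ + ⋯ + 2p_m)`: the generator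
`g₀` has a pole of order exactly `2` on every branch. -/
theorem stmt12 (k : Type) [Field k] [IsAlgClosed k] (m : ℕ) (hm : 1 ≤ m) :
    ∃ g₀ ∈ dualizingSet k m,
      (∀ i : Fin m, (g₀ i).order = -2) ∧
      (∀ g ∈ dualizingSet k m,
        ∃! r : ellipticSubalgebra k m,
          g = fun i : Fin m =>
            (HahnSeries.ofPowerSeries ℤ k
              ((r : Fin m → PowerSeries k) i)) * g₀ i) :=
  stmt12_general k m hm
end

section
/- Let E be a connected complete nodal curve of arithmetic genus one over an algebraically closed field with minimal elliptic subcurve Z, let p₁,…,p_m be distinct smooth points of E such that (E, p₁,…,p_m) is semistable, and suppose d: {components of E} → ℤ is a function satisfying: d(F) = 1 whenever F contains some p_i, and d(F) = d(G) + 1 whenever F, G are adjacent with l(F,Z) = l(G,Z) − 1, where l(−,Z) is dual-graph distance to Z. Then l(p₁,Z) = l(p₂,Z) = ⋯ = l(p_m,Z), i.e. (E, p₁,…,p_m) is balanced. -/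
/-!
Along a geodesic from a component `v` down to `Z`, the distance to `Z` drops by one at each
step and, by the recursion, so does `d`; as `d` is constant on `Z`, this gives
`d v = d(Z) - l(v,Z)`. Every marked component has `d = 1`, so all of them lie at the same
distance `d(Z) - 1` from `Z`.
-/

namespace SimpleGraph

variable {V : Type*} (G : SimpleGraph V) (S : Set V)

/-- Junk value `0` (that is, `sInf ∅`) when `S` is empty. -/
noncomputable def infDist (v : V) : ℕ := sInf ((fun z => G.dist v z) '' S)

variable {G S}

theorem infDist_le_dist {v z : V} (hz : z ∈ S) : G.infDist S v ≤ G.dist v z :=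
  Nat.sInf_le ⟨z, hz, rfl⟩

theorem exists_dist_eq_infDist (hS : S.Nonempty) (v : V) :
    ∃ z ∈ S, G.dist v z = G.infDist S v :=
  Nat.sInf_mem (hS.image _)

namespace Connected

theorem mem_of_infDist_eq_zero (hconn : G.Connected) (hS : S.Nonempty) {v : V}
    (h : G.infDist S v = 0) : v ∈ S := by
  obtain ⟨z, hz, hvz⟩ := exists_dist_eq_infDist (G := G) hS v
  rwa [(hconn.dist_eq_zero_iff).mp (hvz.trans h)]

theorem infDist_le_infDist_add_one (hconn : G.Connected) (hS : S.Nonempty) {u v : V}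
    (hadj : G.Adj u v) :
    G.infDist S v ≤ G.infDist S u + 1 := by
  obtain ⟨z, hz, huz⟩ := exists_dist_eq_infDist (G := G) hS u
  calc G.infDist S v ≤ G.dist v z := infDist_le_dist hz
    _ ≤ G.dist v u + G.dist u z := hconn.dist_triangle
    _ = G.infDist S u + 1 := by rw [dist_comm, dist_eq_one_iff_adj.mpr hadj, huz, add_comm]

/-- `u` is the first step of a geodesic from `v` to a nearest point of `S`. -/
theorem exists_adj_infDist_add_one_eq (hconn : G.Connected) (hS : S.Nonempty) {v : V}
    {n : ℕ} (h : G.infDist S v = n + 1) :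
    ∃ u, G.Adj u v ∧ G.infDist S u + 1 = G.infDist S v := by
  obtain ⟨z, hz, hvz⟩ := exists_dist_eq_infDist (G := G) hS v
  obtain ⟨p, hp⟩ := hconn.exists_walk_length_eq_dist v z
  cases p with
  | nil => simp_all
  | @cons _ u _ hadj q =>
    have hu : G.infDist S u ≤ n := by
      have : G.dist u z ≤ q.length := dist_le q
      have := infDist_le_dist (G := G) (v := u) hz
      simp only [Walk.length_cons] at hp
      omega
    have := hconn.infDist_le_infDist_add_one hS hadj.symm
    exact ⟨u, hadj.symm, by omega⟩

theorem eq_sub_infDist (hconn : G.Connected) (hS : S.Nonempty) {f : V → ℤ} {c : ℤ}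
    (hconst : ∀ z ∈ S, f z = c)
    (hstep : ∀ u v, G.Adj u v → G.infDist S u + 1 = G.infDist S v → f u = f v + 1)
    (v : V) : f v = c - G.infDist S v := by
  induction hn : G.infDist S v generalizing v with
  | zero => simpa using hconst v (hconn.mem_of_infDist_eq_zero hS hn)
  | succ n ih =>
    obtain ⟨u, hadj, hu⟩ := hconn.exists_adj_infDist_add_one_eq hS hn
    have hfu := ih u (by omega)
    have := hstep u v hadj hu
    push_cast
    omega

end Connected

end SimpleGraph

theorem stmt18_general (V : Type)
    (G : SimpleGraph V) (hconn : G.Connected)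
    (Z : Finset V) (hZne : Z.Nonempty)
    (m : ℕ) (marked : Fin m → V)
    (lZ : V → ℕ)
    (hlZ : ∀ v : V, lZ v = sInf ((fun z => G.dist v z) '' (Z : Set V)))
    (d : V → ℤ)
    (hd1 : ∀ i : Fin m, d (marked i) = 1)
    (hdZ : ∀ u v : V, u ∈ Z → v ∈ Z → d u = d v)
    (hrec : ∀ u v : V, G.Adj u v → lZ u + 1 = lZ v → d u = d v + 1) :
    ∀ i j : Fin m, lZ (marked i) = lZ (marked j) := by
  obtain ⟨z₀, hz₀⟩ := hZne
  obtain rfl : lZ = G.infDist Z := funext hlZ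
  have hd : ∀ v, d v = d z₀ - G.infDist Z v :=
    hconn.eq_sub_infDist ⟨z₀, hz₀⟩ (fun z hz => hdZ z z₀ hz hz₀) hrec
  intro i j
  have hi := hd (marked i)
  have hj := hd (marked j)
  rw [hd1] at hi hj
  omega

/-- **Balancedness of semistable tails.**  Let `E` be a connected complete
nodal curve of arithmetic genus one with dual graph `G` (vertices = components)
and minimal elliptic subcurve `Z` (so every cycle of `G` lies in `Z`, the
complement being trees of rational curves), and let `p₁,…,p_m` be distinct
smooth marked points, `marked i` the component carrying `p_i`, such that
`(E,p₁,…,p_m)` is semistable (every component outside `Z` has at least two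
distinguished points).  Write `l(v,Z)` for the dual-graph distance to `Z`.
Suppose `d :` components `→ ℤ` satisfies `d(F) = 1` whenever `F` carries a
marked point, `d` is constant on `Z`, and `d(F) = d(G) + 1` whenever `F, G`
are adjacent with `l(F,Z) = l(G,Z) − 1`.  Then
`l(p₁,Z) = l(p₂,Z) = ⋯ = l(p_m,Z)`, i.e. `(E,p₁,…,p_m)` is balanced. -/
theorem stmt18 (V : Type) [Fintype V] [DecidableEq V]
    (G : SimpleGraph V) [DecidableRel G.Adj] (hconn : G.Connected)
    (Z : Finset V) (hZne : Z.Nonempty)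
    (hforest : ∀ (v : V) (w : G.Walk v v), w.IsCycle → ∀ x ∈ w.support, x ∈ Z)
    (m : ℕ) (hm : 1 ≤ m) (marked : Fin m → V)
    (hsemi : ∀ v : V, v ∉ Z →
      2 ≤ G.degree v + (Finset.univ.filter fun i => marked i = v).card)
    (lZ : V → ℕ)
    (hlZ : ∀ v : V, lZ v = sInf ((fun z => G.dist v z) '' (Z : Set V)))
    (d : V → ℤ)
    (hd1 : ∀ i : Fin m, d (marked i) = 1)
    (hdZ : ∀ u v : V, u ∈ Z → v ∈ Z → d u = d v)
    (hrec : ∀ u v : V, G.Adj u v → lZ u + 1 = lZ v → d u = d v + 1) :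
    ∀ i j : Fin m, lZ (marked i) = lZ (marked j) :=
  stmt18_general V G hconn Z hZne m marked lZ hlZ d hd1 hdZ hrec
end
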